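/- Let X be a separable Banach space, Y a Banach space, G ⊆ X open, and f : G → Y a mapping. Then there exists a σ-directionally porous set D ⊆ G such that for each x ∈ G \ D, either the set V_x of directions u ∈ X in which the one-sided Hadamard derivative f'_{H+}(x,u) exists is empty, or V_x is a closed linear subspace of X and u ↦ f'_{H+}(x,u) is linear on V_x. -/

import Mathlib

/-!
Quantify `f'_{H+}(x,u) = L` as: `‖f z - f x - t L‖ ≤ ε t` whenever `0 < t < δ` and
`‖z - (x + t u)‖ < δ t`. Two quantitative failures, with directions from a countable dense set and
`ε, δ` of the form `1 / (n + 1)`, are directionally porous: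

* the estimates hold at `x` in directions `u` and `v`, but quotients in directions near `v - u`
  are frequently far from `M - L`. Every point `y` of the same kind near `x - s u` reaches `x` and
  `x + s w` in directions close to `u` and `v`, and close points have close estimates in a common
  direction; so the bad quotient at `(w, s)` would be close to `M - L`.
* `f` is `K`-Lipschitz at `x` and the estimate holds in direction `u` with value `L`, but
  quotients near `u` are frequently far from `L`. A `K`-Lipschitz point near `x + s u` forces
  `f (x + s w)` close to `f x + s L`.

Off these sets the graph of `f'_{H+}(x, ·)` is stable under subtraction and positive scaling, hence
a linear subspace of `X × Y`, and it is closed. Since `f'_{H+}(x, 0) = 0` makes `f` Lipschitz at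
`x`, the derivative is bounded on its domain, which is therefore closed (`Y` is complete).
-/

open Filter Topology Set Metric

section Defs
variable {X Y : Type*} [NormedAddCommGroup X] [NormedSpace ℝ X]
  [NormedAddCommGroup Y] [NormedSpace ℝ Y]

/-- One-sided directional derivative: `f'₊(x,v) = L`. -/
def HasPosDirDeriv (f : X → Y) (x v : X) (L : Y) : Prop :=
  Tendsto (fun t : ℝ => t⁻¹ • (f (x + t • v) - f x)) (𝓝[>] (0:ℝ)) (𝓝 L)

/-- Two-sided directional derivative: `f'(x,v) = L`. -/
def HasDirDeriv (f : X → Y) (x v : X) (L : Y) : Prop :=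
  Tendsto (fun t : ℝ => t⁻¹ • (f (x + t • v) - f x)) (𝓝[≠] (0:ℝ)) (𝓝 L)

/-- One-sided Hadamard directional derivative: `f'_{H+}(x,v) = L`. -/
def HasHadamardPosDirDeriv (f : X → Y) (x v : X) (L : Y) : Prop :=
  Tendsto (fun p : X × ℝ => p.2⁻¹ • (f (x + p.2 • p.1) - f x))
    ((𝓝 v) ×ˢ (𝓝[>] (0:ℝ))) (𝓝 L)

/-- Two-sided Hadamard directional derivative: `f'_H(x,v) = L`. -/
def HasHadamardDirDeriv (f : X → Y) (x v : X) (L : Y) : Prop :=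
  Tendsto (fun p : X × ℝ => p.2⁻¹ • (f (x + p.2 • p.1) - f x))
    ((𝓝 v) ×ˢ (𝓝[≠] (0:ℝ))) (𝓝 L)

/-- `f` is Lipschitz at the point `x`: `limsup_{y→x} ‖f y - f x‖/‖y-x‖ < ∞`. -/
def LipschitzAtPt (f : X → Y) (x : X) : Prop :=
  ∃ K δ : ℝ, 0 < δ ∧ ∀ y, ‖y - x‖ < δ → ‖f y - f x‖ ≤ K * ‖y - x‖

/-- `A` is porous at `x` in the direction `v`. -/
def PorousAt (A : Set X) (x v : X) : Prop :=
  ∃ p > (0:ℝ), ∃ t : ℕ → ℝ, (∀ n, 0 < t n) ∧ Tendsto t atTop (𝓝 0) ∧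
    ∀ n, ball (x + t n • v) (p * t n) ∩ A = ∅

/-- `A` is directionally porous. -/
def DirectionallyPorous (A : Set X) : Prop :=
  ∀ x ∈ A, ∃ v : X, v ≠ 0 ∧ PorousAt A x v

/-- `A` is σ-directionally porous. -/
def SigmaDirectionallyPorous (A : Set X) : Prop :=
  ∃ s : ℕ → Set X, (∀ n, DirectionallyPorous (s n)) ∧ A = ⋃ n, s n

/-- The open cone `C(x,v,δ)`. -/
def Cone (x v : X) (δ : ℝ) : Set X :=
  {y : X | y ≠ x ∧ ‖v - ‖y - x‖⁻¹ • (y - x)‖ < δ}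

/-- `f` is Hadamard differentiable at `x` with derivative `L`: the difference quotients
converge to `L v` uniformly in `v` from each compact set. -/
def HadamardDifferentiableAt (f : X → Y) (x : X) (L : X →L[ℝ] Y) : Prop :=
  ∀ C : Set X, IsCompact C →
    TendstoUniformlyOn (fun (t : ℝ) (v : X) => t⁻¹ • (f (x + t • v) - f x))
      (fun v => L v) (𝓝[≠] (0:ℝ)) C

end Defs

section

variable {X Y : Type*} [NormedAddCommGroup X] [NormedSpace ℝ X]
  [NormedAddCommGroup Y] [NormedSpace ℝ Y]

lemma norm_inv_smul_sub {E : Type*} [NormedAddCommGroup E] [NormedSpace ℝ E] {t : ℝ}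
    (ht : 0 < t) (a b : E) : ‖t⁻¹ • a - b‖ = t⁻¹ * ‖a - t • b‖ := by
  rw [← norm_smul_of_nonneg (inv_nonneg.2 ht.le), smul_sub, smul_smul, inv_mul_cancel₀ ht.ne',
    one_smul]

def HadamardApprox (f : X → Y) (x u : X) (L : Y) (δ ε : ℝ) : Prop :=
  ∀ t ∈ Ioo 0 δ, ∀ z, ‖z - (x + t • u)‖ < δ * t → ‖f z - f x - t • L‖ ≤ ε * t

lemma hasHadamardPosDirDeriv_iff {f : X → Y} {x u : X} {L : Y} :
    HasHadamardPosDirDeriv f x u L ↔ ∀ ε > 0, ∃ δ > 0, HadamardApprox f x u L δ ε := by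
  have hbasis : ((𝓝 u) ×ˢ (𝓝[>] (0:ℝ))).HasBasis (0 < ·) fun δ => ball u δ ×ˢ Ioo 0 δ :=
    nhds_basis_ball.prod_same_index_mono (nhdsGT_basis 0)
      (fun _ _ _ _ h => ball_subset_ball h) (fun _ _ _ _ h => Ioo_subset_Ioo_right h)
  unfold HasHadamardPosDirDeriv
  rw [hbasis.tendsto_iff nhds_basis_closedBall]
  refine forall₂_congr fun ε _ => exists_congr fun δ => and_congr_right fun hδ => ⟨?_, ?_⟩
  · rintro h t ht z hz
    have hdir : t⁻¹ • (z - x) ∈ ball u δ := by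
      rw [mem_ball, dist_eq_norm, norm_inv_smul_sub ht.1, sub_sub, inv_mul_lt_iff₀ ht.1,
        mul_comm]
      exact hz
    have := h (_, t) ⟨hdir, ht⟩
    rwa [mem_closedBall, dist_eq_norm, smul_smul, mul_inv_cancel₀ ht.1.ne', one_smul,
      add_sub_cancel, norm_inv_smul_sub ht.1, inv_mul_le_iff₀ ht.1, mul_comm] at this
  · rintro h ⟨v, t⟩ ⟨hv, ht⟩
    have hz : ‖(x + t • v) - (x + t • u)‖ < δ * t := by
      rw [add_sub_add_left_eq_sub, ← smul_sub, norm_smul, Real.norm_of_nonneg ht.1.le, mul_comm]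
      exact mul_lt_mul_of_pos_right (mem_ball_iff_norm.1 hv) ht.1
    rw [mem_closedBall, dist_eq_norm, norm_inv_smul_sub ht.1, inv_mul_le_iff₀ ht.1, mul_comm]
    exact h t ht _ hz

namespace HadamardApprox

variable {f : X → Y} {x y u : X} {L M : Y} {δ ε : ℝ}

lemma of_norm_sub_add_le {u' : X} {δ' : ℝ} (h : HadamardApprox f x u L δ ε)
    (hu : ‖u' - u‖ + δ' ≤ δ) : HadamardApprox f x u' L δ' ε := by
  intro t ht z hz
  have ht' : t ∈ Ioo 0 δ := ⟨ht.1, ht.2.trans_le (by linarith [norm_nonneg (u' - u)])⟩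
  refine h t ht' z ?_
  calc ‖z - (x + t • u)‖ = ‖(z - (x + t • u')) + t • (u' - u)‖ := by congr 1; module
    _ ≤ ‖z - (x + t • u')‖ + t * ‖u' - u‖ := by
      refine (norm_add_le _ _).trans_eq ?_
      rw [norm_smul, Real.norm_of_nonneg ht.1.le]
    _ < δ' * t + t * ‖u' - u‖ := by gcongr
    _ ≤ δ * t := by nlinarith [ht.1]

lemma smul (h : HadamardApprox f x u L δ ε) {c : ℝ} (hc : 0 < c) :
    HadamardApprox f x (c • u) (c • L) (min (δ / c) (c * δ)) (c * ε) := by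
  intro t ht z hz
  have hct : c * t ∈ Ioo 0 δ :=
    ⟨by nlinarith [ht.1], by
      have := ht.2.trans_le (min_le_left _ _); rwa [lt_div_iff₀ hc, mul_comm] at this⟩
  have := h (c * t) hct z (by
    rw [mul_smul, smul_comm]
    calc _ < min (δ / c) (c * δ) * t := hz
      _ ≤ (c * δ) * t := by gcongr; exacts [ht.1.le, min_le_right _ _]
      _ = δ * (c * t) := by ring)
  rw [mul_smul, smul_comm] at this
  exact this.trans_eq (by ring)

lemma norm_sub_sub_smul_le (hx : HadamardApprox f x u L δ ε)
    (hy : HadamardApprox f y u M δ ε) {t : ℝ} (ht : t ∈ Ioo 0 δ) (hxy : ‖x - y‖ < δ * t) :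
    ‖f x - f y - t • (M - L)‖ ≤ 2 * ε * t := by
  have hδt : 0 < δ * t := mul_pos (ht.1.trans ht.2) ht.1
  have h₁ := hx t ht (x + t • u) (by simpa using hδt)
  have h₂ := hy t ht (x + t • u) (by rwa [add_sub_add_right_eq_sub])
  calc ‖f x - f y - t • (M - L)‖
      = ‖(f (x + t • u) - f y - t • M) - (f (x + t • u) - f x - t • L)‖ := by congr 1; module
    _ ≤ ε * t + ε * t := norm_sub_le_of_le h₂ h₁
    _ = 2 * ε * t := by ring

/-- Compare `f x - f y` with the increments along `u` at the scales `t` and `2 t`. -/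
lemma norm_sub_le (hx : HadamardApprox f x u L δ ε) (hy : HadamardApprox f y u M δ ε)
    (hδ : 0 < δ) (hxy : ‖x - y‖ < δ ^ 2 / 2) : ‖L - M‖ ≤ 6 * ε := by
  obtain ⟨t, hxt, htδ⟩ : ∃ t, ‖x - y‖ / δ < t ∧ t < δ / 2 :=
    exists_between (by rw [div_lt_iff₀ hδ]; linarith)
  rw [div_lt_iff₀ hδ, mul_comm] at hxt
  have ht : 0 < t := (div_nonneg (norm_nonneg _) hδ.le).trans_lt ((div_lt_iff₀ hδ).2 (by linarith))
  have h₁ := norm_sub_sub_smul_le hx hy ⟨ht, by linarith⟩ hxt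
  have h₂ := norm_sub_sub_smul_le hx hy (t := 2 * t) ⟨by linarith, by linarith⟩ (by nlinarith)
  have key : t * ‖L - M‖ ≤ t * (6 * ε) := by
    calc t * ‖L - M‖ = ‖t • (M - L)‖ := by
          rw [norm_smul, Real.norm_of_nonneg ht.le, norm_sub_rev]
      _ = ‖(f x - f y - t • (M - L)) - (f x - f y - (2 * t) • (M - L))‖ := by
          congr 1; module
      _ ≤ 2 * ε * t + 2 * ε * (2 * t) := norm_sub_le_of_le h₁ h₂
      _ = t * (6 * ε) := by ring
  exact le_of_mul_le_mul_left key ht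

end HadamardApprox

namespace HasHadamardPosDirDeriv

variable {f : X → Y} {x u : X} {L : Y}

lemma eq_zero_of_zero (h : HasHadamardPosDirDeriv f x 0 L) : L = 0 := by
  refine norm_le_zero_iff.1 (le_of_forall_pos_le_add fun ε hε => ?_)
  obtain ⟨δ, hδ, hδε⟩ := hasHadamardPosDirDeriv_iff.1 h ε hε
  have := hδε (δ / 2) ⟨half_pos hδ, half_lt_self hδ⟩ x (by simpa using by positivity)
  rw [sub_self, zero_sub, norm_neg, norm_smul, Real.norm_of_nonneg (half_pos hδ).le,
    mul_comm] at this
  linarith [le_of_mul_le_mul_right this (half_pos hδ)]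

lemma smul (h : HasHadamardPosDirDeriv f x u L) {c : ℝ} (hc : 0 < c) :
    HasHadamardPosDirDeriv f x (c • u) (c • L) := by
  refine hasHadamardPosDirDeriv_iff.2 fun ε hε => ?_
  obtain ⟨δ, hδ, hδε⟩ := hasHadamardPosDirDeriv_iff.1 h (ε / c) (div_pos hε hc)
  refine ⟨_, lt_min (div_pos hδ hc) (mul_pos hc hδ), ?_⟩
  simpa [mul_div_cancel₀ ε hc.ne'] using hδε.smul hc

end HasHadamardPosDirDeriv

def FrequentlyFar (f : X → Y) (x u : X) (L : Y) (ε c : ℝ) : Prop :=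
  ∀ η > 0, ∃ t ∈ Ioo 0 η, ∃ w, ‖w - u‖ ≤ c ∧ ε * t ≤ ‖f (x + t • w) - f x - t • L‖

lemma exists_frequentlyFar_of_not_hasHadamardPosDirDeriv {f : X → Y} {x u : X} {L : Y}
    (h : ¬ HasHadamardPosDirDeriv f x u L) : ∃ ε > 0, ∀ c > 0, FrequentlyFar f x u L ε c := by
  rw [hasHadamardPosDirDeriv_iff] at h
  push Not at h
  obtain ⟨ε, hε, hfar⟩ := h
  refine ⟨ε, hε, fun c hc η hη => ?_⟩
  have := hfar (min η c) (lt_min hη hc)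
  simp only [HadamardApprox] at this
  push Not at this
  obtain ⟨t, ht, z, hz, hgap⟩ := this
  refine ⟨t, ⟨ht.1, ht.2.trans_le (min_le_left _ _)⟩, t⁻¹ • (z - x), ?_, ?_⟩
  · rw [← sub_sub] at hz
    rw [norm_inv_smul_sub ht.1, inv_mul_le_iff₀ ht.1]
    nlinarith [min_le_right η c, ht.1]
  · rw [smul_smul, mul_inv_cancel₀ ht.1.ne', one_smul, add_sub_cancel]
    exact hgap.le

lemma FrequentlyFar.of_norm_sub_le {f : X → Y} {x u u' : X} {L L' : Y} {ε ε' c c' : ℝ}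
    (h : FrequentlyFar f x u L ε c) (hu : ‖u - u'‖ + c ≤ c') (hL : ‖L - L'‖ + ε' ≤ ε) :
    FrequentlyFar f x u' L' ε' c' := by
  intro η hη
  obtain ⟨t, ht, w, hw, hgap⟩ := h η hη
  refine ⟨t, ht, w, ?_, ?_⟩
  · linarith [norm_sub_le_norm_sub_add_norm_sub w u u']
  · calc ε' * t ≤ ε * t - t * ‖L - L'‖ := by nlinarith [ht.1]
      _ ≤ ‖f (x + t • w) - f x - t • L‖ - ‖t • (L - L')‖ := by
          rw [norm_smul, Real.norm_of_nonneg ht.1.le]; linarith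
      _ ≤ ‖f (x + t • w) - f x - t • L'‖ := by
          rw [sub_le_iff_le_add]
          refine (norm_sub_le _ _).trans_eq' ?_
          congr 1; module

lemma porousAt_of_forall_exists {A : Set X} {x v : X} {p : ℝ} (hp : 0 < p)
    (h : ∀ η > 0, ∃ t ∈ Ioo 0 η, ball (x + t • v) (p * t) ∩ A = ∅) : PorousAt A x v := by
  choose t ht hA using fun n : ℕ => h (1 / (n + 1)) Nat.one_div_pos_of_nat
  exact ⟨p, hp, t, fun n => (ht n).1, squeeze_zero (fun n => (ht n).1.le) (fun n => (ht n).2.le)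
    tendsto_one_div_add_atTop_nhds_zero_nat, hA⟩

def subtractionDefectSet (f : X → Y) (u v : X) (ε δ : ℝ) : Set X :=
  {x | ∃ L M, HadamardApprox f x u L δ (ε / 15) ∧ HadamardApprox f x v M δ (ε / 15) ∧
    FrequentlyFar f x (v - u) (M - L) ε (δ / 2)}

/-- If `y` lies near `x - s u`, then `x` and `x + s w` are reached from `y` in the directions
`≈ u` and `≈ v`, while the approximations at `y` are close to those at `x`. -/
lemma norm_sub_sub_smul_le_of_subtractionDefect {f : X → Y} {x y u v w : X} {L M L' M' : Y}
    {δ ε s : ℝ} (hxL : HadamardApprox f x u L δ ε) (hxM : HadamardApprox f x v M δ ε)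
    (hyL : HadamardApprox f y u L' δ ε) (hyM : HadamardApprox f y v M' δ ε) (hs : s ∈ Ioo 0 δ)
    (hw : ‖w - (v - u)‖ ≤ δ / 2) (hy : ‖y - (x - s • u)‖ < δ / 2 * s)
    (hxy : ‖x - y‖ < δ ^ 2 / 2) :
    ‖f (x + s • w) - f x - s • (M - L)‖ ≤ 14 * ε * s := by
  have hδ : 0 < δ := hs.1.trans hs.2
  have h₁ : ‖f x - f y - s • L'‖ ≤ ε * s := by
    refine hyL s hs x ?_
    rw [← norm_neg]
    calc ‖-(x - (y + s • u))‖ = ‖y - (x - s • u)‖ := by congr 1; abel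
      _ < δ * s := hy.trans_le (by nlinarith [hs.1])
  have h₂ : ‖f (x + s • w) - f y - s • M'‖ ≤ ε * s := by
    refine hyM s hs _ ?_
    calc ‖x + s • w - (y + s • v)‖ = ‖s • (w - (v - u)) - (y - (x - s • u))‖ := by
          congr 1; module
      _ ≤ s * (δ / 2) + ‖y - (x - s • u)‖ := by
          refine (norm_sub_le _ _).trans (add_le_add_left ?_ _)
          rw [norm_smul, Real.norm_of_nonneg hs.1.le]
          exact mul_le_mul_of_nonneg_left hw hs.1.le
      _ < δ * s := by linarith
  have hL := hxL.norm_sub_le hyL hδ hxy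
  have hM := hxM.norm_sub_le hyM hδ hxy
  calc ‖f (x + s • w) - f x - s • (M - L)‖
      = ‖(f (x + s • w) - f y - s • M') - (f x - f y - s • L') + s • (M' - M) + s • (L - L')‖ := by
        congr 1; module
    _ ≤ ε * s + ε * s + s * (6 * ε) + s * (6 * ε) := by
        refine norm_add₃_le.trans (add_le_add_three (norm_sub_le_of_le h₂ h₁) ?_ ?_) <;>
          rw [norm_smul, Real.norm_of_nonneg hs.1.le] <;>
          refine mul_le_mul_of_nonneg_left ?_ hs.1.le
        exacts [(norm_sub_rev M' M).trans_le hM, hL]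
    _ = 14 * ε * s := by ring

lemma directionallyPorous_subtractionDefectSet {f : X → Y} {u : X} (hu : u ≠ 0) (v : X)
    {ε δ : ℝ} (hε : 0 < ε) (hδ : 0 < δ) : DirectionallyPorous (subtractionDefectSet f u v ε δ) := by
  rintro x ⟨L, M, hxL, hxM, hfar⟩
  refine ⟨-u, neg_ne_zero.2 hu, porousAt_of_forall_exists (half_pos hδ) fun η hη => ?_⟩
  have hη₀ : 0 < δ ^ 2 / (2 * (δ + ‖u‖)) := by positivity
  obtain ⟨s, hs, w, hw, hgap⟩ := hfar (min η (min δ (δ ^ 2 / (2 * (δ + ‖u‖)))))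
    (lt_min hη (lt_min hδ hη₀))
  have hsη := hs.2.trans_le (min_le_left _ _)
  have hsδ := hs.2.trans_le ((min_le_right _ _).trans (min_le_left _ _))
  have hs₀ := hs.2.trans_le ((min_le_right _ _).trans (min_le_right _ _))
  refine ⟨s, ⟨hs.1, hsη⟩, eq_empty_iff_forall_notMem.2 ?_⟩
  rintro y ⟨hy, L', M', hyL, hyM, -⟩
  rw [mem_ball, dist_eq_norm, smul_neg, ← sub_eq_add_neg] at hy
  have hxy : ‖x - y‖ < δ ^ 2 / 2 := by
    rw [lt_div_iff₀ (by positivity)] at hs₀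
    calc ‖x - y‖ = ‖s • u - (y - (x - s • u))‖ := by congr 1; module
      _ ≤ s * ‖u‖ + δ / 2 * s := by
          refine (norm_sub_le _ _).trans (add_le_add (le_of_eq ?_) hy.le)
          rw [norm_smul, Real.norm_of_nonneg hs.1.le]
      _ < δ ^ 2 / 2 := by nlinarith [norm_nonneg u, hs.1]
  have := norm_sub_sub_smul_le_of_subtractionDefect hxL hxM hyL hyM ⟨hs.1, hsδ⟩ hw hy hxy
  nlinarith [hs.1]

/-- The aperture `ε / (8 (K + 1))` keeps the Lipschitz error `2 K c` below `ε / 4`. -/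
def closureDefectSet (f : X → Y) (u : X) (K ε δ : ℝ) : Set X :=
  {x | (∀ y, ‖y - x‖ < δ → ‖f y - f x‖ ≤ K * ‖y - x‖) ∧
    ∃ L, HadamardApprox f x u L δ (ε / 4) ∧ FrequentlyFar f x u L ε (ε / (8 * (K + 1)))}

lemma norm_sub_sub_smul_le_of_lipschitz_near {f : X → Y} {x y u w : X} {L : Y}
    {K δ ε c s : ℝ} (hxL : HadamardApprox f x u L δ ε)
    (hyLip : ∀ z, ‖z - y‖ < δ → ‖f z - f y‖ ≤ K * ‖z - y‖) (hK : 0 ≤ K) (hs : s ∈ Ioo 0 δ)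
    (hw : ‖w - u‖ ≤ c) (hy : ‖y - (x + s • u)‖ < min c δ * s) (hcs : 2 * c * s < δ) :
    ‖f (x + s • w) - f x - s • L‖ ≤ (2 * K * c + ε) * s := by
  have h₁ : ‖f y - f x - s • L‖ ≤ ε * s :=
    hxL s hs y (hy.trans_le (mul_le_mul_of_nonneg_right (min_le_right _ _) hs.1.le))
  have hz : ‖x + s • w - y‖ ≤ 2 * c * s := by
    calc ‖x + s • w - y‖ = ‖s • (w - u) - (y - (x + s • u))‖ := by congr 1; module
      _ ≤ s * c + c * s := by
          refine (norm_sub_le _ _).trans (add_le_add ?_ ?_)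
          · rw [norm_smul, Real.norm_of_nonneg hs.1.le]
            exact mul_le_mul_of_nonneg_left hw hs.1.le
          · exact hy.le.trans (mul_le_mul_of_nonneg_right (min_le_left _ _) hs.1.le)
      _ = 2 * c * s := by ring
  have h₂ : ‖f (x + s • w) - f y‖ ≤ K * (2 * c * s) :=
    (hyLip _ (hz.trans_lt hcs)).trans (mul_le_mul_of_nonneg_left hz hK)
  calc ‖f (x + s • w) - f x - s • L‖ = ‖(f (x + s • w) - f y) + (f y - f x - s • L)‖ := by
        congr 1; abel
    _ ≤ K * (2 * c * s) + ε * s := norm_add_le_of_le h₂ h₁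
    _ = (2 * K * c + ε) * s := by ring

lemma directionallyPorous_closureDefectSet {f : X → Y} {u : X} (hu : u ≠ 0) {K ε δ : ℝ}
    (hK : 0 ≤ K) (hε : 0 < ε) (hδ : 0 < δ) : DirectionallyPorous (closureDefectSet f u K ε δ) := by
  rintro x ⟨-, L, hxL, hfar⟩
  set c := ε / (8 * (K + 1)) with hc_def
  have hc : 0 < c := by positivity
  have hKc : 8 * K * c ≤ ε := by
    rw [hc_def, mul_div_assoc']; exact (div_le_iff₀ (by positivity)).2 (by nlinarith)
  refine ⟨u, hu, porousAt_of_forall_exists (lt_min hc hδ) fun η hη => ?_⟩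
  obtain ⟨s, hs, w, hw, hgap⟩ := hfar (min η (δ / (2 * c + 1))) (lt_min hη (by positivity))
  have hsδ : s * (2 * c + 1) < δ :=
    (lt_div_iff₀ (by positivity)).1 (hs.2.trans_le (min_le_right _ _))
  refine ⟨s, ⟨hs.1, hs.2.trans_le (min_le_left _ _)⟩, eq_empty_iff_forall_notMem.2 ?_⟩
  rintro y ⟨hy, hyLip, -⟩
  rw [mem_ball, dist_eq_norm] at hy
  have := norm_sub_sub_smul_le_of_lipschitz_near hxL hyLip hK ⟨hs.1, by nlinarith⟩ hw hy
    (by nlinarith)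
  nlinarith [hs.1]

lemma DirectionallyPorous.mono {A B : Set X} (h : DirectionallyPorous A) (hBA : B ⊆ A) :
    DirectionallyPorous B := by
  intro x hx
  obtain ⟨v, hv, p, hp, t, ht, htlim, hball⟩ := h x (hBA hx)
  exact ⟨v, hv, p, hp, t, ht, htlim, fun n => subset_empty_iff.1 <|
    (inter_subset_inter_right _ hBA).trans (hball n).subset⟩

lemma DirectionallyPorous.sigmaDirectionallyPorous {A : Set X} (h : DirectionallyPorous A) :
    SigmaDirectionallyPorous A :=
  ⟨fun _ => A, fun _ => h, (iUnion_const A).symm⟩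

namespace SigmaDirectionallyPorous

lemma mono {A B : Set X} (h : SigmaDirectionallyPorous A) (hBA : B ⊆ A) :
    SigmaDirectionallyPorous B := by
  obtain ⟨s, hs, rfl⟩ := h
  exact ⟨fun n => s n ∩ B, fun n => (hs n).mono inter_subset_left,
    by rw [← iUnion_inter, inter_eq_right.2 hBA]⟩

lemma iUnion {ι : Type*} [Countable ι] {s : ι → Set X}
    (h : ∀ i, SigmaDirectionallyPorous (s i)) : SigmaDirectionallyPorous (⋃ i, s i) := by
  choose t ht hst using h
  rcases isEmpty_or_nonempty ι with hι | hι
  · exact ⟨fun _ => ∅, fun _ x hx => hx.elim, by simp⟩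
  obtain ⟨e, he⟩ := exists_surjective_nat (ι × ℕ)
  refine ⟨fun n => t (e n).1 (e n).2, fun n => ht _ _, ?_⟩
  rw [he.iUnion_comp (fun p => t p.1 p.2), iUnion_prod']
  exact iUnion_congr hst

lemma biUnion {ι : Type*} {I : Set ι} (hI : I.Countable) {s : ι → Set X}
    (h : ∀ i ∈ I, SigmaDirectionallyPorous (s i)) : SigmaDirectionallyPorous (⋃ i ∈ I, s i) := by
  have := hI.to_subtype
  rw [biUnion_eq_iUnion]
  exact iUnion fun i => h i i.2

lemma union {A B : Set X} (hA : SigmaDirectionallyPorous A) (hB : SigmaDirectionallyPorous B) :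
    SigmaDirectionallyPorous (A ∪ B) := by
  rw [union_eq_iUnion]
  exact iUnion (Bool.forall_bool.2 ⟨hB, hA⟩)

end SigmaDirectionallyPorous

def exceptionalSet (f : X → Y) (S : Set X) : Set X :=
  (⋃ u ∈ S \ {0}, ⋃ v ∈ S, ⋃ m : ℕ, ⋃ n : ℕ,
      subtractionDefectSet f u v (1 / (m + 1)) (1 / (n + 1))) ∪
    ⋃ u ∈ S \ {0}, ⋃ K : ℕ, ⋃ m : ℕ, ⋃ n : ℕ,
      closureDefectSet f u K (1 / (m + 1)) (1 / (n + 1))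

lemma sigmaDirectionallyPorous_exceptionalSet (f : X → Y) {S : Set X} (hS : S.Countable) :
    SigmaDirectionallyPorous (exceptionalSet f S) :=
  .union
    (.biUnion (hS.mono sdiff_subset) fun _ hu => .biUnion hS fun _ _ =>
      .iUnion fun _ => .iUnion fun _ => (directionallyPorous_subtractionDefectSet hu.2 _
        Nat.one_div_pos_of_nat Nat.one_div_pos_of_nat).sigmaDirectionallyPorous)
    (.biUnion (hS.mono sdiff_subset) fun _ hu => .iUnion fun _ =>
      .iUnion fun _ => .iUnion fun _ => (directionallyPorous_closureDefectSet hu.2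
        (Nat.cast_nonneg _) Nat.one_div_pos_of_nat Nat.one_div_pos_of_nat).sigmaDirectionallyPorous)

def hadamardGraph (f : X → Y) (x : X) : Set (X × Y) :=
  {p | HasHadamardPosDirDeriv f x p.1 p.2}

section Covering

variable {f : X → Y} {S : Set X} {x u : X} {L : Y}

lemma mem_exceptionalSet_of_not_hasHadamardPosDirDeriv_sub (hS : Dense S) {v : X} {M : Y}
    (hu : u ≠ 0) (hL : HasHadamardPosDirDeriv f x u L) (hM : HasHadamardPosDirDeriv f x v M)
    (hbad : ¬ HasHadamardPosDirDeriv f x (v - u) (M - L)) : x ∈ exceptionalSet f S := by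
  have : Nontrivial X := ⟨⟨u, 0, hu⟩⟩
  obtain ⟨ε, hε, hfar⟩ := exists_frequentlyFar_of_not_hasHadamardPosDirDeriv hbad
  obtain ⟨m, hm⟩ := exists_nat_one_div_lt hε
  set ε' : ℝ := 1 / (m + 1)
  obtain ⟨δu, hδu, huδ⟩ := hasHadamardPosDirDeriv_iff.1 hL (ε' / 15) (by positivity)
  obtain ⟨δv, hδv, hvδ⟩ := hasHadamardPosDirDeriv_iff.1 hM (ε' / 15) (by positivity)
  obtain ⟨n, hn⟩ := exists_nat_one_div_lt (half_pos (lt_min hδu hδv))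
  set δ : ℝ := 1 / (n + 1)
  have hδ : 0 < δ := Nat.one_div_pos_of_nat
  obtain ⟨u', hu'S, hu'⟩ := (hS.sdiff_singleton 0).exists_dist_lt u (by positivity : 0 < δ / 8)
  obtain ⟨v', hv'S, hv'⟩ := hS.exists_dist_lt v (by positivity : 0 < δ / 8)
  rw [dist_eq_norm] at hu' hv'
  refine Or.inl (mem_iUnion₂.2 ⟨u', hu'S, mem_iUnion₂.2 ⟨v', hv'S, mem_iUnion.2 ⟨m,
    mem_iUnion.2 ⟨n, L, M, ?_, ?_, ?_⟩⟩⟩⟩)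
  · exact huδ.of_norm_sub_add_le (by linarith [norm_sub_rev u' u, min_le_left δu δv])
  · exact hvδ.of_norm_sub_add_le (by linarith [norm_sub_rev v' v, min_le_right δu δv])
  · refine (hfar (δ / 4) (by positivity)).of_norm_sub_le ?_
      (by rw [sub_self, norm_zero, zero_add]; exact hm.le)
    have : ‖(v - u) - (v' - u')‖ ≤ ‖v - v'‖ + ‖u - u'‖ := by
      rw [sub_sub_sub_comm]; exact norm_sub_le _ _
    linarith

lemma mem_exceptionalSet_of_mem_closure (hS : Dense S) {K r : ℝ} (hr : 0 < r)
    (hlip : ∀ y, ‖y - x‖ < r → ‖f y - f x‖ ≤ K * ‖y - x‖) (hu : u ≠ 0)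
    (hmem : (u, L) ∈ closure (hadamardGraph f x))
    (hbad : ¬ HasHadamardPosDirDeriv f x u L) : x ∈ exceptionalSet f S := by
  have : Nontrivial X := ⟨⟨u, 0, hu⟩⟩
  obtain ⟨ε, hε, hfar⟩ := exists_frequentlyFar_of_not_hasHadamardPosDirDeriv hbad
  obtain ⟨m, hm⟩ := exists_nat_one_div_lt (half_pos hε)
  set ε' : ℝ := 1 / (m + 1)
  have hε' : 0 < ε' := Nat.one_div_pos_of_nat
  set c := ε' / (8 * (⌈K⌉₊ + 1))
  have hc : 0 < c := by positivity
  obtain ⟨⟨v, Lv⟩, hv, hdist⟩ :=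
    Metric.mem_closure_iff.1 hmem (min (c / 4) (ε' / 4)) (by positivity)
  rw [Prod.dist_eq, max_lt_iff, dist_eq_norm, dist_eq_norm] at hdist
  dsimp only at hv hdist
  obtain ⟨δv, hδv, hvδ⟩ := hasHadamardPosDirDeriv_iff.1 hv (ε' / 4) (by positivity)
  obtain ⟨n, hn⟩ := exists_nat_one_div_lt (lt_min (half_pos hδv) hr)
  set δ : ℝ := 1 / (n + 1)
  have hδ : 0 < δ := Nat.one_div_pos_of_nat
  obtain ⟨u', hu'S, hu'⟩ := (hS.sdiff_singleton 0).exists_dist_lt v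
    (lt_min hδ (by positivity : 0 < c / 4))
  rw [dist_eq_norm, lt_min_iff] at hu'
  refine Or.inr (mem_iUnion₂.2 ⟨u', hu'S, mem_iUnion.2 ⟨⌈K⌉₊, mem_iUnion.2 ⟨m,
    mem_iUnion.2 ⟨n, fun y hy => ?_, Lv, ?_, ?_⟩⟩⟩⟩)
  · exact (hlip y (hy.trans (hn.trans_le (min_le_right _ _)))).trans
      (mul_le_mul_of_nonneg_right (Nat.le_ceil K) (norm_nonneg _))
  · exact hvδ.of_norm_sub_add_le (by linarith [norm_sub_rev u' v, min_le_left (δv / 2) r])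
  · refine (hfar (c / 4) (by positivity)).of_norm_sub_le ?_ ?_
    · linarith [norm_sub_le_norm_sub_add_norm_sub u v u', min_le_left (c / 4) (ε' / 4)]
    · linarith [min_le_right (c / 4) (ε' / 4)]

end Covering

section Graph

variable {f : X → Y} {x : X}

lemma exists_submodule_eq_hadamardGraph (hne : (hadamardGraph f x).Nonempty)
    (hsub : ∀ u v L M, u ≠ 0 → HasHadamardPosDirDeriv f x u L → HasHadamardPosDirDeriv f x v M →
      HasHadamardPosDirDeriv f x (v - u) (M - L)) :
    ∃ g : Submodule ℝ (X × Y), (g : Set (X × Y)) = hadamardGraph f x := by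
  have eq_zero : ∀ p ∈ hadamardGraph f x, p.1 = 0 → p = 0 := by
    rintro ⟨u, L⟩ (hp : HasHadamardPosDirDeriv f x u L) (rfl : u = 0)
    rw [hp.eq_zero_of_zero, Prod.mk_zero_zero]
  have sub_mem : ∀ p ∈ hadamardGraph f x, ∀ q ∈ hadamardGraph f x, q - p ∈ hadamardGraph f x := by
    intro p hp q hq
    by_cases h0 : p.1 = 0
    · rwa [eq_zero p hp h0, sub_zero]
    · exact hsub _ _ _ _ h0 hp hq
  obtain ⟨p₀, hp₀⟩ := hne
  have zero_mem : (0 : X × Y) ∈ hadamardGraph f x := by simpa using sub_mem p₀ hp₀ p₀ hp₀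
  have neg_mem : ∀ p ∈ hadamardGraph f x, -p ∈ hadamardGraph f x := fun p hp => by
    simpa using sub_mem p hp 0 zero_mem
  have smul_mem : ∀ c : ℝ, 0 < c → ∀ p ∈ hadamardGraph f x, c • p ∈ hadamardGraph f x :=
    fun c hc p hp => HasHadamardPosDirDeriv.smul hp hc
  refine ⟨{ carrier := hadamardGraph f x
            zero_mem' := zero_mem
            add_mem' := fun {p q} hp hq => by
              simpa [add_comm] using sub_mem _ (neg_mem p hp) q hq
            smul_mem' := fun c p hp => ?_ }, rfl⟩
  rcases lt_trichotomy c 0 with hc | rfl | hc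
  · simpa using smul_mem (-c) (neg_pos.2 hc) (-p) (neg_mem p hp)
  · simpa using zero_mem
  · exact smul_mem c hc p hp

lemma HasHadamardPosDirDeriv.lipschitzAtPt (h : HasHadamardPosDirDeriv f x 0 0) :
    LipschitzAtPt f x := by
  obtain ⟨δ, hδ, hδ1⟩ := hasHadamardPosDirDeriv_iff.1 h 1 one_pos
  refine ⟨2 / δ, δ ^ 2 / 2, by positivity, fun y hy => ?_⟩
  rcases eq_or_ne y x with rfl | hyx
  · simp
  have hpos : 0 < ‖y - x‖ := norm_pos_iff.2 (sub_ne_zero.2 hyx)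
  have ht : 2 * ‖y - x‖ / δ ∈ Ioo 0 δ :=
    ⟨by positivity, (div_lt_iff₀ hδ).2 (by nlinarith)⟩
  have := hδ1 _ ht y (by rw [smul_zero, add_zero, mul_div_cancel₀ _ hδ.ne']; linarith)
  rw [smul_zero, sub_zero] at this
  exact this.trans_eq (by ring)

lemma HasHadamardPosDirDeriv.norm_le {u : X} {L : Y} (h : HasHadamardPosDirDeriv f x u L)
    {K r : ℝ} (hr : 0 < r) (hlip : ∀ y, ‖y - x‖ < r → ‖f y - f x‖ ≤ K * ‖y - x‖) :
    ‖L‖ ≤ K * ‖u‖ := by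
  have hdir : Tendsto (fun t : ℝ => t⁻¹ • (f (x + t • u) - f x)) (𝓝[>] 0) (𝓝 L) :=
    h.comp (tendsto_const_nhds.prodMk tendsto_id)
  have hsmall : ∀ᶠ t : ℝ in 𝓝[>] 0, ‖t • u‖ < r := by
    have : Tendsto (fun t : ℝ => ‖t • u‖) (𝓝 0) (𝓝 0) := by
      simpa using (tendsto_id (x := 𝓝 (0 : ℝ))).smul_const u |>.norm
    exact nhdsWithin_le_nhds (this.eventually (gt_mem_nhds hr))
  refine le_of_tendsto hdir.norm ?_
  filter_upwards [self_mem_nhdsWithin, hsmall] with t (ht : 0 < t) htu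
  rw [norm_smul, norm_inv, Real.norm_of_nonneg ht.le, inv_mul_le_iff₀ ht]
  calc ‖f (x + t • u) - f x‖ ≤ K * ‖x + t • u - x‖ := hlip _ (by rwa [add_sub_cancel_left])
    _ = t * (K * ‖u‖) := by rw [add_sub_cancel_left, norm_smul, Real.norm_of_nonneg ht.le]; ring

lemma isClosed_hadamardGraph {S : Set X} (hS : Dense S) (hx : x ∉ exceptionalSet f S)
    (h : HasHadamardPosDirDeriv f x 0 0) : IsClosed (hadamardGraph f x) := by
  obtain ⟨K, r, hr, hlip⟩ := h.lipschitzAtPt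
  refine isClosed_of_closure_subset fun ⟨u, L⟩ hmem => ?_
  by_contra hbad
  rcases eq_or_ne u 0 with rfl | hu
  · have hbound : closure (hadamardGraph f x) ⊆ {p | ‖p.2‖ ≤ K * ‖p.1‖} :=
      closure_minimal (fun p hp => HasHadamardPosDirDeriv.norm_le hp hr hlip)
        (isClosed_le continuous_snd.norm (continuous_const.mul continuous_fst.norm))
    have hL : ‖L‖ ≤ K * ‖(0 : X)‖ := hbound hmem
    rw [norm_zero, mul_zero, norm_le_zero_iff] at hL
    exact hbad (hL ▸ h)
  · exact hx (mem_exceptionalSet_of_mem_closure hS hr hlip hu hmem hbad)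

end Graph

/-- Along a sequence in `g` with convergent first coordinates, the second coordinates are Cauchy. -/
lemma Submodule.isClosed_map_fst [CompleteSpace Y] {g : Submodule ℝ (X × Y)}
    (hg : IsClosed (g : Set (X × Y))) {K : ℝ} (hK : ∀ p ∈ g, ‖p.2‖ ≤ K * ‖p.1‖) :
    IsClosed (g.map (LinearMap.fst ℝ X Y) : Set X) := by
  refine isClosed_of_closure_subset fun u hu => ?_
  obtain ⟨v, hvg, hv⟩ := mem_closure_iff_seq_limit.1 hu
  choose p hp hpv using fun n => Submodule.mem_map.1 (hvg n)
  simp only [LinearMap.fst_apply] at hpv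
  have hcauchy : CauchySeq fun n => (p n).2 := by
    rw [Metric.cauchySeq_iff]
    intro ε hε
    obtain ⟨N, hN⟩ := Metric.cauchySeq_iff.1 hv.cauchySeq (ε / (|K| + 1)) (by positivity)
    refine ⟨N, fun m hm n hn => ?_⟩
    have hmn := hN m hm n hn
    rw [dist_eq_norm, ← hpv, ← hpv, lt_div_iff₀ (by positivity)] at hmn
    calc dist (p m).2 (p n).2 = ‖(p m - p n).2‖ := dist_eq_norm _ _
      _ ≤ K * ‖(p m - p n).1‖ := hK _ (g.sub_mem (hp m) (hp n))
      _ ≤ (|K| + 1) * ‖(p m).1 - (p n).1‖ := by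
          gcongr; exacts [le_abs_self K |>.trans (le_add_of_nonneg_right zero_le_one), le_rfl]
      _ < ε := by linarith
  obtain ⟨L, hL⟩ := cauchySeq_tendsto_of_complete hcauchy
  have hfst : Tendsto (fun n => (p n).1) atTop (𝓝 u) := by simpa only [hpv] using hv
  have hlim : Tendsto p atTop (𝓝 (u, L)) := hfst.prodMk_nhds hL
  exact ⟨(u, L), hg.mem_of_tendsto hlim (Eventually.of_forall hp), rfl⟩

lemma hadamardDirections_eq_empty_or_closed_subspace [CompleteSpace Y] {f : X → Y} {S : Set X}
    (hS : Dense S) {x : X} (hx : x ∉ exceptionalSet f S) :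
    {u : X | ∃ L, HasHadamardPosDirDeriv f x u L} = ∅ ∨
      ∃ V : Submodule ℝ X, (V : Set X) = {u : X | ∃ L, HasHadamardPosDirDeriv f x u L} ∧
        IsClosed (V : Set X) ∧
        ∃ T : V →ₗ[ℝ] Y, ∀ u : V, HasHadamardPosDirDeriv f x (u : X) (T u) := by
  rcases eq_empty_or_nonempty {u : X | ∃ L, HasHadamardPosDirDeriv f x u L} with h | ⟨u, L, hL⟩
  · exact Or.inl h
  obtain ⟨g, hg⟩ := exists_submodule_eq_hadamardGraph ⟨(u, L), hL⟩ fun u v L M hu hL hM =>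
    by_contra fun hbad => hx (mem_exceptionalSet_of_not_hasHadamardPosDirDeriv_sub hS hu hL hM hbad)
  have hmem (p : X × Y) : p ∈ g ↔ HasHadamardPosDirDeriv f x p.1 p.2 := Set.ext_iff.1 hg p
  have h₀ : HasHadamardPosDirDeriv f x 0 0 := (hmem 0).1 g.zero_mem
  obtain ⟨K, r, hr, hlip⟩ := h₀.lipschitzAtPt
  have hg₀ : ∀ p ∈ g, p.1 = 0 → p.2 = 0 := by
    rintro ⟨u, L⟩ hp (rfl : u = 0)
    exact ((hmem _).1 hp).eq_zero_of_zero
  refine Or.inr ⟨g.toLinearPMap.domain, ?_, ?_, g.toLinearPMap.toFun,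
    fun u => (hmem _).1 (g.mem_graph_toLinearPMap hg₀ u)⟩
  · ext u
    simp [Submodule.toLinearPMap_domain, hmem]
  · exact Submodule.isClosed_map_fst (hg ▸ isClosed_hadamardGraph hS hx h₀)
      (K := K) fun p hp => ((hmem p).1 hp).norm_le hr hlip

end

theorem stmt16_general {X Y : Type*} [NormedAddCommGroup X] [NormedSpace ℝ X]
    [TopologicalSpace.SeparableSpace X]
    [NormedAddCommGroup Y] [NormedSpace ℝ Y] [CompleteSpace Y]
    (G : Set X) (f : X → Y) :
    ∃ D : Set X, SigmaDirectionallyPorous D ∧ D ⊆ G ∧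
      ∀ x ∈ G \ D,
        {u : X | ∃ L, HasHadamardPosDirDeriv f x u L} = ∅ ∨
        ∃ V : Submodule ℝ X, (V : Set X) = {u : X | ∃ L, HasHadamardPosDirDeriv f x u L} ∧
          IsClosed (V : Set X) ∧
          ∃ T : V →ₗ[ℝ] Y, ∀ u : V, HasHadamardPosDirDeriv f x (u : X) (T u) := by
  obtain ⟨S, hSc, hSd⟩ := TopologicalSpace.exists_countable_dense X
  exact ⟨G ∩ exceptionalSet f S,
    (sigmaDirectionallyPorous_exceptionalSet f hSc).mono inter_subset_right, inter_subset_left,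
    fun x hx => hadamardDirections_eq_empty_or_closed_subspace hSd fun h => hx.2 ⟨hx.1, h⟩⟩

theorem stmt16 {X Y : Type*} [NormedAddCommGroup X] [NormedSpace ℝ X] [CompleteSpace X]
    [TopologicalSpace.SeparableSpace X]
    [NormedAddCommGroup Y] [NormedSpace ℝ Y] [CompleteSpace Y]
    (G : Set X) (hG : IsOpen G) (f : X → Y) :
    ∃ D : Set X, SigmaDirectionallyPorous D ∧ D ⊆ G ∧
      ∀ x ∈ G \ D,
        {u : X | ∃ L, HasHadamardPosDirDeriv f x u L} = ∅ ∨
        ∃ V : Submodule ℝ X, (V : Set X) = {u : X | ∃ L, HasHadamardPosDirDeriv f x u L} ∧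
          IsClosed (V : Set X) ∧
          ∃ T : V →ₗ[ℝ] Y, ∀ u : V, HasHadamardPosDirDeriv f x (u : X) (T u) :=
  stmt16_general G f
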